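/- Let H be a finite set with |H| = N, let (X_t)_{t≥1} be i.i.d. uniform draws from H, let c ∈ H, and let A₁, …, A_r ⊆ H be nonempty subsets that are pairwise disjoint and all disjoint from {c}. Let T = min(τ_c, min_{1≤i≤r} σ_{A_i}) and let β₂ = P(τ_c < min_{1≤i≤r} σ_{A_i}) be the probability that the process stops because c appears (rather than because some A_i is completed). Then E[T] = β₂ · N. (That is, if one of the alignment sets in a first-to-complete scheme has size 2, then d^I = β₂^I · |H|.) -/

import Mathlib

open MeasureTheory ProbabilityTheory

/-- The collection time `σ_A`: the smallest time `t ≥ 1` such that every element of `A`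
has appeared among `X_1, …, X_t` (with the convention `sInf ∅ = 0`). -/
noncomputable def collectTime {Ω H : Type*} (X : ℕ → Ω → H) (A : Set H) (ω : Ω) : ℕ :=
  sInf {t : ℕ | ∀ a ∈ A, ∃ s, 1 ≤ s ∧ s ≤ t ∧ X s ω = a}

/-- The first hitting time `τ_c`: the first time `t ≥ 1` with `X_t = c`. -/
noncomputable def hitTime {Ω H : Type*} (X : ℕ → Ω → H) (c : H) (ω : Ω) : ℕ :=
  collectTime X {c} ω

/-! Write `T` for the first completion time. The event `{t < T}` is determined by `X₁, …, Xₜ`,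
so `X_{t+1}` is independent of it and `P(X_{t+1} = c, t < T) = P(t < T) / N`. The scheme stops
because of `c` exactly when `X_{t+1} = c` for the unique `t` with `t < T ≤ t + 1`: as `c` lies
in no `Aᵢ`, its arrival cannot complete an `Aᵢ` at the same moment. Summing over `t` gives
`β₂ = N⁻¹ ∑ₜ P(t < T) = E[T] / N`. Everything is argued on the almost sure event that every
element of `H` appears eventually, where the convention `sInf ∅ = 0` in `collectTime` is never
used. -/

section CollectionTimes

open Set Filter ENNReal

theorem Nat.lt_sInf_iff_of_monotone {p : ℕ → Prop} (hp : Monotone p) {m : ℕ} :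
    m < sInf {n | p n} ↔ (∃ n, p n) ∧ ¬ p m := by
  classical
  by_cases hex : ∃ n, p n
  · rw [Nat.sInf_def (s := {n | p n}) hex, Nat.lt_find_iff]
    exact ⟨fun h => ⟨hex, h m le_rfl⟩, fun h n hn hpn => h.2 (hp hn hpn)⟩
  · have hempty : {n | p n} = ∅ := eq_empty_iff_forall_notMem.2 fun n hn => hex ⟨n, hn⟩
    simp [hempty, hex]

variable {Ω H : Type*}

section History

variable (X : ℕ → Ω → H)

def history (t : ℕ) (ω : Ω) : Finset.Icc 1 t → H := fun s => X s ω

variable {X} {ω : Ω} {t : ℕ}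

theorem mem_range_history {a : H} :
    a ∈ range (history X t ω) ↔ ∃ s, 1 ≤ s ∧ s ≤ t ∧ X s ω = a := by
  simp [history, and_assoc]

theorem range_history_zero : range (history X 0 ω) = ∅ := by
  ext a
  simp only [mem_range_history, mem_empty_iff_false, iff_false]
  omega

theorem range_history_succ :
    range (history X (t + 1) ω) = insert (X (t + 1) ω) (range (history X t ω)) := by
  ext a
  simp only [mem_range_history, mem_insert_iff]
  constructor
  · rintro ⟨s, hs1, hst, rfl⟩
    rcases Nat.lt_or_eq_of_le hst with hlt | rfl
    · exact Or.inr ⟨s, hs1, Nat.le_of_lt_succ hlt, rfl⟩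
    · exact Or.inl rfl
  · rintro (rfl | ⟨s, hs1, hst, rfl⟩)
    · exact ⟨t + 1, le_add_self, le_rfl, rfl⟩
    · exact ⟨s, hs1, hst.trans t.le_succ, rfl⟩

theorem monotone_range_history : Monotone fun t => range (history X t ω) :=
  monotone_nat_of_le_succ fun _ => range_history_succ.symm ▸ subset_insert _ _

theorem exists_subset_range_history [Finite H] (hω : ∀ a, ∃ u, a ∈ range (history X u ω))
    (A : Set H) : ∃ u, A ⊆ range (history X u ω) := by
  choose f hf using hω
  have := Fintype.ofFinite H
  exact ⟨Finset.univ.sup f, fun a _ =>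
    monotone_range_history (Finset.le_sup (Finset.mem_univ a)) (hf a)⟩

theorem collectTime_eq_sInf (A : Set H) :
    collectTime X A ω = sInf {t | A ⊆ range (history X t ω)} := by
  simp only [collectTime, subset_def, mem_range_history]

theorem collectTime_le {A : Set H} (h : A ⊆ range (history X t ω)) : collectTime X A ω ≤ t := by
  rw [collectTime_eq_sInf]
  exact Nat.sInf_le h

theorem lt_collectTime_iff {A : Set H} :
    t < collectTime X A ω ↔ (∃ u, A ⊆ range (history X u ω)) ∧ ¬ A ⊆ range (history X t ω) := by
  rw [collectTime_eq_sInf]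
  exact Nat.lt_sInf_iff_of_monotone fun _ _ h hA => hA.trans (monotone_range_history h)

theorem hitTime_le {c : H} (h : c ∈ range (history X t ω)) : hitTime X c ω ≤ t :=
  collectTime_le (singleton_subset_iff.2 h)

theorem lt_hitTime_iff {c : H} (hc : ∃ u, c ∈ range (history X u ω)) :
    t < hitTime X c ω ↔ c ∉ range (history X t ω) := by
  rw [hitTime, lt_collectTime_iff]
  simp only [singleton_subset_iff]
  exact and_iff_right hc

end History

section FirstCompletion

variable {ι : Type*} (X : ℕ → Ω → H) (c : H) (A : ι → Set H)

noncomputable def firstCompletionTime (ω : Ω) : ℕ :=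
  min (hitTime X c ω) (⨅ i, collectTime X (A i) ω)

variable {X c A} {ω : Ω} {t : ℕ}

theorem pairwise_disjoint_eq_and_lt_firstCompletionTime :
    Pairwise (Function.onFun Disjoint fun t =>
      {ω | X (t + 1) ω = c} ∩ {ω | t < firstCompletionTime X c A ω}) := by
  refine (pairwise_disjoint_on _).2 fun t u htu => disjoint_left.2 ?_
  rintro ω ⟨hXc, -⟩ ⟨-, hu⟩
  have hτ : hitTime X c ω ≤ t + 1 := hitTime_le (range_history_succ ▸ hXc ▸ mem_insert _ _)
  exact absurd hu (not_lt.2 ((min_le_left _ _).trans (hτ.trans htu)))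

variable [Nonempty ι]

theorem natCast_firstCompletionTime :
    (firstCompletionTime X c A ω : ℝ) =
      min (hitTime X c ω : ℝ) (⨅ i, (collectTime X (A i) ω : ℝ)) := by
  rw [firstCompletionTime, Nat.cast_min, Nat.mono_cast.map_ciInf_of_continuousAt
    continuous_of_discreteTopology.continuousAt (OrderBot.bddBelow _)]

theorem lt_iInf_collectTime_iff [Finite H] (hω : ∀ a, ∃ u, a ∈ range (history X u ω)) :
    t < ⨅ i, collectTime X (A i) ω ↔ ∀ i, ¬ A i ⊆ range (history X t ω) := by
  have hlt : ∀ i, t < collectTime X (A i) ω ↔ ¬ A i ⊆ range (history X t ω) := fun i => by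
    rw [lt_collectTime_iff, and_iff_right (exists_subset_range_history hω _)]
  refine ⟨fun h i => (hlt i).1 (h.trans_le (ciInf_le (OrderBot.bddBelow _) i)), fun h => ?_⟩
  exact Nat.lt_of_succ_le (le_ciInf fun i => (hlt i).2 (h i))

theorem lt_firstCompletionTime_iff [Finite H] (hω : ∀ a, ∃ u, a ∈ range (history X u ω)) :
    t < firstCompletionTime X c A ω ↔
      c ∉ range (history X t ω) ∧ ∀ i, ¬ A i ⊆ range (history X t ω) := by
  rw [firstCompletionTime, lt_min_iff, lt_hitTime_iff (hω c), lt_iInf_collectTime_iff hω]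

theorem hitTime_lt_iInf_collectTime_iff [Finite H] (hω : ∀ a, ∃ u, a ∈ range (history X u ω))
    (hc : ∀ i, c ∉ A i) :
    hitTime X c ω < ⨅ i, collectTime X (A i) ω ↔
      ∃ t, X (t + 1) ω = c ∧ t < firstCompletionTime X c A ω := by
  constructor
  · intro h
    have hpos : hitTime X c ω ≠ 0 := by
      rw [← Nat.pos_iff_ne_zero, lt_hitTime_iff (hω c), range_history_zero]
      exact notMem_empty c
    obtain ⟨t, ht⟩ := Nat.exists_eq_succ_of_ne_zero hpos
    have hlt : t < hitTime X c ω := ht ▸ t.lt_succ_self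
    have hmem : c ∈ range (history X (t + 1) ω) := by
      by_contra hnot
      have := (lt_hitTime_iff (hω c)).2 hnot
      rw [ht] at this
      exact lt_irrefl _ this
    rw [range_history_succ] at hmem
    refine ⟨t, ?_, lt_min hlt (hlt.trans h)⟩
    exact (hmem.resolve_right ((lt_hitTime_iff (hω c)).1 hlt)).symm
  · rintro ⟨t, hXc, ht⟩
    have hτ : hitTime X c ω ≤ t + 1 := hitTime_le (range_history_succ ▸ hXc ▸ mem_insert _ _)
    refine hτ.trans_lt ((lt_iInf_collectTime_iff hω).2 fun i hsub => ?_)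
    rw [range_history_succ, hXc, subset_insert_iff_of_notMem (hc i)] at hsub
    exact (lt_iInf_collectTime_iff hω).1 (lt_min_iff.1 ht).2 i hsub

end FirstCompletion

section Probability

variable [MeasurableSpace Ω] {μ : Measure Ω} [MeasurableSpace H] {X : ℕ → Ω → H}

theorem lintegral_natCast_eq_tsum_measure_lt {f : Ω → ℕ} (hf : Measurable f) :
    ∫⁻ ω, (f ω : ℝ≥0∞) ∂μ = ∑' t, μ {ω | t < f ω} := by
  have hsum : ∀ n : ℕ, (n : ℝ≥0∞) = ∑' t, {m : ℕ | t < m}.indicator 1 n := fun n => by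
    rw [tsum_eq_sum (s := Finset.range n) fun t ht => by simpa using ht]
    simp [Set.indicator, Finset.filter_true_of_mem fun x hx => Finset.mem_range.1 hx]
  have hmeas : ∀ t, MeasurableSet {ω | t < f ω} := fun t => hf measurableSet_Ioi
  calc ∫⁻ ω, (f ω : ℝ≥0∞) ∂μ = ∫⁻ ω, ∑' t, {ω | t < f ω}.indicator 1 ω ∂μ :=
        lintegral_congr fun ω => hsum (f ω)
    _ = ∑' t, μ {ω | t < f ω} := by
        rw [lintegral_tsum fun t => (measurable_one.indicator (hmeas t)).aemeasurable]
        exact tsum_congr fun t => lintegral_indicator_one (hmeas t)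

theorem measurable_history (hX : ∀ t, Measurable (X t)) (t : ℕ) : Measurable (history X t) :=
  measurable_pi_lambda _ fun s => hX s

theorem measure_preimage_inter_history_preimage (hX : ∀ t, Measurable (X t))
    (hindep : iIndepFun X μ) (t : ℕ) {S : Set H} (hS : MeasurableSet S)
    {B : Set (Finset.Icc 1 t → H)} (hB : MeasurableSet B) :
    μ (X (t + 1) ⁻¹' S ∩ history X t ⁻¹' B) = μ (X (t + 1) ⁻¹' S) * μ (history X t ⁻¹' B) := by
  have hindep' := hindep.indepFun_finset {t + 1} (Finset.Icc 1 t) (by simp) hX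
  exact hindep'.measure_inter_preimage_eq_mul {g | g ⟨t + 1, Finset.mem_singleton_self _⟩ ∈ S} B
    (measurable_pi_apply _ hS) hB

variable [MeasurableSingletonClass H]

theorem measurable_collectTime [Finite H] (hX : ∀ t, Measurable (X t)) (A : Set H) :
    Measurable (collectTime X A) := by
  refine measurable_of_Ioi fun t => ?_
  have hpre : collectTime X A ⁻¹' Ioi t =
      (⋃ u, history X u ⁻¹' {h | A ⊆ range h}) ∩ history X t ⁻¹' {h | ¬ A ⊆ range h} := by
    ext ω
    simp [lt_collectTime_iff]
  rw [hpre]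
  exact (MeasurableSet.iUnion fun u => measurable_history hX u MeasurableSet.of_discrete).inter
    (measurable_history hX t MeasurableSet.of_discrete)

theorem measurable_firstCompletionTime [Finite H] {ι : Type*} [Countable ι]
    (hX : ∀ t, Measurable (X t)) (c : H) (A : ι → Set H) :
    Measurable (firstCompletionTime X c A) :=
  (measurable_collectTime hX _).min (Measurable.iInf fun i => measurable_collectTime hX (A i))

theorem tsum_measure_eq_inter_lt_eq_mul_lintegral (hX : ∀ t, Measurable (X t))
    (hindep : iIndepFun X μ) {c : H} {p : ℝ≥0∞} (hunif : ∀ t, μ {ω | X t ω = c} = p)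
    {T : Ω → ℕ} (hT : Measurable T) {B : ∀ t, Set (Finset.Icc 1 t → H)}
    (hB : ∀ t, MeasurableSet (B t)) (hTB : ∀ t, {ω | t < T ω} =ᵐ[μ] history X t ⁻¹' B t) :
    ∑' t, μ ({ω | X (t + 1) ω = c} ∩ {ω | t < T ω}) = p * ∫⁻ ω, T ω ∂μ := by
  rw [lintegral_natCast_eq_tsum_measure_lt hT, ← ENNReal.tsum_mul_left]
  refine tsum_congr fun t => ?_
  rw [measure_congr ((ae_eq_refl _).inter (hTB t)), measure_congr (hTB t)]
  exact (measure_preimage_inter_history_preimage hX hindep t (measurableSet_singleton c)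
    (hB t)).trans (congrArg (· * _) (hunif (t + 1)))

variable [IsProbabilityMeasure μ]

theorem ae_exists_eq (hX : ∀ t, Measurable (X t)) (hindep : iIndepFun X μ) {a : H} {p : ℝ≥0∞}
    (hp : p ≠ 0) (hunif : ∀ t, μ {ω | X t ω = a} = p) :
    ∀ᵐ ω ∂μ, ∃ s, 1 ≤ s ∧ X s ω = a := by
  rw [ae_iff, ← nonpos_iff_eq_zero]
  refine ge_of_tendsto' (tendsto_pow_atTop_nhds_zero_of_lt_one
    (ENNReal.sub_lt_self one_ne_top one_ne_zero hp)) fun t => ?_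
  have hcompl : ∀ s, μ (X s ⁻¹' {a}ᶜ) = 1 - p := fun s => by
    rw [preimage_compl, prob_compl_eq_one_sub (hX s (measurableSet_singleton a))]
    exact congrArg _ (hunif s)
  calc μ {ω | ¬∃ s, 1 ≤ s ∧ X s ω = a}
      ≤ μ (⋂ s ∈ Finset.Icc 1 t, X s ⁻¹' {a}ᶜ) := measure_mono fun ω hω => by
        simp only [mem_iInter, Finset.mem_Icc]
        exact fun s hs h => hω ⟨s, hs.1, h⟩
    _ = ∏ s ∈ Finset.Icc 1 t, μ (X s ⁻¹' {a}ᶜ) :=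
        hindep.meas_biInter fun s _ => ⟨{a}ᶜ, (measurableSet_singleton a).compl, rfl⟩
    _ = (1 - p) ^ t := by
        rw [Finset.prod_congr rfl fun s _ => hcompl s, Finset.prod_const, Nat.card_Icc,
          Nat.add_sub_cancel]

theorem measure_hitTime_lt_iInf_collectTime [Finite H] {ι : Type*} [Countable ι] [Nonempty ι]
    (hX : ∀ t, Measurable (X t)) (hindep : iIndepFun X μ) {p : ℝ≥0∞} (hp : p ≠ 0)
    (hunif : ∀ t a, μ {ω | X t ω = a} = p) {c : H} {A : ι → Set H} (hc : ∀ i, c ∉ A i) :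
    μ {ω | hitTime X c ω < ⨅ i, collectTime X (A i) ω} =
      p * ∫⁻ ω, firstCompletionTime X c A ω ∂μ := by
  have hall : ∀ᵐ ω ∂μ, ∀ a, ∃ u, a ∈ range (history X u ω) :=
    ae_all_iff.2 fun a => (ae_exists_eq hX hindep hp fun t => hunif t a).mono
      fun ω ⟨s, hs, hXs⟩ => ⟨s, mem_range_history.2 ⟨s, hs, le_rfl, hXs⟩⟩
  have hT := measurable_firstCompletionTime hX c A
  calc μ {ω | hitTime X c ω < ⨅ i, collectTime X (A i) ω}
      = μ (⋃ t, {ω | X (t + 1) ω = c} ∩ {ω | t < firstCompletionTime X c A ω}) :=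
        measure_congr <| eventuallyEq_set.2 <| hall.mono fun ω hω => by
          simpa using hitTime_lt_iInf_collectTime_iff hω hc
    _ = ∑' t, μ ({ω | X (t + 1) ω = c} ∩ {ω | t < firstCompletionTime X c A ω}) :=
        measure_iUnion pairwise_disjoint_eq_and_lt_firstCompletionTime fun t =>
          (hX _ (measurableSet_singleton c)).inter (hT measurableSet_Ioi)
    _ = p * ∫⁻ ω, firstCompletionTime X c A ω ∂μ :=
        tsum_measure_eq_inter_lt_eq_mul_lintegral hX hindep (hunif · c) hT
          (B := fun t => {h | c ∉ range h ∧ ∀ i, ¬ A i ⊆ range h})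
          (fun _ => MeasurableSet.of_discrete)
          (fun _ => eventuallyEq_set.2 <| hall.mono fun _ hω => lt_firstCompletionTime_iff hω)

end Probability

end CollectionTimes

theorem delay_eq_beta2_mul_card_general
    {Ω : Type*} [MeasurableSpace Ω] (μ : Measure Ω) [IsProbabilityMeasure μ]
    {H : Type*} [Fintype H] [MeasurableSpace H] [MeasurableSingletonClass H]
    (N : ℕ)
    (X : ℕ → Ω → H) (hmeas : ∀ t, Measurable (X t))
    (hindep : iIndepFun X μ)
    (hunif : ∀ t, ∀ c : H, μ {ω | X t ω = c} = (N : ENNReal)⁻¹)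
    (c : H) (r : ℕ) (hr : 0 < r) (A : Fin r → Finset H)
    (hc : ∀ i, c ∉ A i) :
    ∫ ω, (min (hitTime X c ω) (⨅ i, collectTime X (A i : Set H) ω) : ℝ) ∂μ =
      (μ {ω | hitTime X c ω < ⨅ i, collectTime X (A i : Set H) ω}).toReal * N := by
  have : Nonempty (Fin r) := ⟨⟨0, hr⟩⟩
  have hN : (N : ℝ) ≠ 0 := by
    rintro hN
    simpa [Nat.cast_eq_zero.1 hN] using (hunif 0 c).symm.trans_le prob_le_one
  have hT := measurable_firstCompletionTime hmeas c fun i => (A i : Set H)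
  simp_rw [← natCast_firstCompletionTime]
  rw [integral_eq_lintegral_of_nonneg_ae (ae_of_all _ fun ω => Nat.cast_nonneg _)
      (measurable_from_nat.comp hT).aestronglyMeasurable,
    measure_hitTime_lt_iInf_collectTime hmeas hindep
      (ENNReal.inv_ne_zero.2 (ENNReal.natCast_ne_top N)) hunif hc]
  simp only [ENNReal.ofReal_natCast, ENNReal.toReal_mul, ENNReal.toReal_inv, ENNReal.toReal_natCast]
  field_simp

/-- If one of the alignment sets in a first-to-complete scheme has size 2 (waiting for
the single complement matrix `c`), then the average delay satisfies `d^I = β₂^I · |H|`: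
with `T = min(τ_c, min_i σ_{A_i})` and `β₂ = P(τ_c < min_i σ_{A_i})`, one has
`E[T] = β₂ · N`. -/
theorem delay_eq_beta2_mul_card
    {Ω : Type*} [MeasurableSpace Ω] (μ : Measure Ω) [IsProbabilityMeasure μ]
    {H : Type*} [Fintype H] [MeasurableSpace H] [MeasurableSingletonClass H]
    (N : ℕ) (hcard : Fintype.card H = N)
    (X : ℕ → Ω → H) (hmeas : ∀ t, Measurable (X t))
    (hindep : iIndepFun X μ)
    (hunif : ∀ t, ∀ c : H, μ {ω | X t ω = c} = (N : ENNReal)⁻¹)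
    (c : H) (r : ℕ) (hr : 0 < r) (A : Fin r → Finset H)
    (hA : ∀ i, (A i).Nonempty)
    (hdisj : Pairwise fun i j => Disjoint (A i) (A j))
    (hc : ∀ i, c ∉ A i) :
    ∫ ω, (min (hitTime X c ω) (⨅ i, collectTime X (A i : Set H) ω) : ℝ) ∂μ =
      (μ {ω | hitTime X c ω < ⨅ i, collectTime X (A i : Set H) ω}).toReal * N :=
  delay_eq_beta2_mul_card_general μ N X hmeas hindep hunif c r hr A hc
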